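/- (Cayley) Let 𝒜 = ⟦a_{ijk}⟧ ∈ ℂ^{2×2×2} (indices i,j,k ∈ {0,1}). The system of six bilinear equations 𝒜(x, y, e_k) = 0 (k = 0,1), 𝒜(x, e_j, z) = 0 (j = 0,1), 𝒜(e_i, y, z) = 0 (i = 0,1) — explicitly, a_{000}x_0y_0 + a_{010}x_0y_1 + a_{100}x_1y_0 + a_{110}x_1y_1 = 0, a_{001}x_0y_0 + a_{011}x_0y_1 + a_{101}x_1y_0 + a_{111}x_1y_1 = 0, a_{000}x_0z_0 + a_{001}x_0z_1 + a_{100}x_1z_0 + a_{101}x_1z_1 = 0, a_{010}x_0z_0 + a_{011}x_0z_1 + a_{110}x_1z_0 + a_{111}x_1z_1 = 0, a_{000}y_0z_0 + a_{001}y_0z_1 + a_{010}y_1z_0 + a_{011}y_1z_1 = 0, a_{100}y_0z_0 + a_{101}y_0z_1 + a_{110}y_1z_0 + a_{111}y_1z_1 = 0 — has a solution (x,y,z) ∈ ℂ²×ℂ²×ℂ² with x, y, z all nonzero if and only if Det_{2,2,2}(𝒜) = 0. -/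
import Mathlib

open Matrix

private lemma vec_ne2 (u v : ℂ) (h : u ≠ 0 ∨ v ≠ 0) : (![u, v] : Fin 2 → ℂ) ≠ 0 := by
  intro hz
  rcases h with h | h
  · exact h (congrFun hz 0)
  · exact h (congrFun hz 1)

private lemma fun_ne2 (x : Fin 2 → ℂ) (h : x ≠ 0) : x 0 ≠ 0 ∨ x 1 ≠ 0 := by
  by_contra hc
  push_neg at hc
  exact h (funext fun i => by fin_cases i <;> simp [hc.1, hc.2])

private lemma build (a : Fin 2 → Fin 2 → Fin 2 → ℂ) (x0 x1 y0 y1 z0 z1 : ℂ)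
    (hx : x0 ≠ 0 ∨ x1 ≠ 0) (hy : y0 ≠ 0 ∨ y1 ≠ 0) (hz : z0 ≠ 0 ∨ z1 ≠ 0)
    (e10 : a 0 0 0 * x0 * y0 + a 0 1 0 * x0 * y1 + a 1 0 0 * x1 * y0 + a 1 1 0 * x1 * y1 = 0)
    (e11 : a 0 0 1 * x0 * y0 + a 0 1 1 * x0 * y1 + a 1 0 1 * x1 * y0 + a 1 1 1 * x1 * y1 = 0)
    (e20 : a 0 0 0 * x0 * z0 + a 0 0 1 * x0 * z1 + a 1 0 0 * x1 * z0 + a 1 0 1 * x1 * z1 = 0)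
    (e21 : a 0 1 0 * x0 * z0 + a 0 1 1 * x0 * z1 + a 1 1 0 * x1 * z0 + a 1 1 1 * x1 * z1 = 0)
    (e30 : a 0 0 0 * y0 * z0 + a 0 0 1 * y0 * z1 + a 0 1 0 * y1 * z0 + a 0 1 1 * y1 * z1 = 0)
    (e31 : a 1 0 0 * y0 * z0 + a 1 0 1 * y0 * z1 + a 1 1 0 * y1 * z0 + a 1 1 1 * y1 * z1 = 0) :
    ∃ x y z : Fin 2 → ℂ, x ≠ 0 ∧ y ≠ 0 ∧ z ≠ 0 ∧
      (∀ k, ∑ i, ∑ j, a i j k * x i * y j = 0) ∧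
      (∀ j, ∑ i, ∑ k, a i j k * x i * z k = 0) ∧
      (∀ i, ∑ j, ∑ k, a i j k * y j * z k = 0) := by
  refine ⟨![x0, x1], ![y0, y1], ![z0, z1], vec_ne2 _ _ hx, vec_ne2 _ _ hy, vec_ne2 _ _ hz,
    ?_, ?_, ?_⟩
  · intro k
    fin_cases k <;>
      simp only [Fin.sum_univ_two, Fin.mk_zero, Fin.mk_one, Matrix.cons_val_zero, Matrix.cons_val_one, Matrix.head_cons,
        Fin.isValue]
    · linear_combination e10
    · linear_combination e11
  · intro j
    fin_cases j <;>
      simp only [Fin.sum_univ_two, Fin.mk_zero, Fin.mk_one, Matrix.cons_val_zero, Matrix.cons_val_one, Matrix.head_cons,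
        Fin.isValue]
    · linear_combination e20
    · linear_combination e21
  · intro i
    fin_cases i <;>
      simp only [Fin.sum_univ_two, Fin.mk_zero, Fin.mk_one, Matrix.cons_val_zero, Matrix.cons_val_one, Matrix.head_cons,
        Fin.isValue]
    · linear_combination e30
    · linear_combination e31

private lemma key (a : Fin 2 → Fin 2 → Fin 2 → ℂ) (x0 x1 : ℂ)
    (hx : x0 ≠ 0 ∨ x1 ≠ 0)
    (hdet : (a 0 0 0 * x0 + a 1 0 0 * x1) * (a 0 1 1 * x0 + a 1 1 1 * x1) - (a 0 0 1 * x0 + a 1 0 1 * x1) * (a 0 1 0 * x0 + a 1 1 0 * x1) = 0)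
    (hT0 : (a 0 1 1 * x0 + a 1 1 1 * x1) * a 0 0 0 - (a 0 0 1 * x0 + a 1 0 1 * x1) * a 0 1 0 - (a 0 1 0 * x0 + a 1 1 0 * x1) * a 0 0 1 + (a 0 0 0 * x0 + a 1 0 0 * x1) * a 0 1 1 = 0)
    (hT1 : (a 0 1 1 * x0 + a 1 1 1 * x1) * a 1 0 0 - (a 0 0 1 * x0 + a 1 0 1 * x1) * a 1 1 0 - (a 0 1 0 * x0 + a 1 1 0 * x1) * a 1 0 1 + (a 0 0 0 * x0 + a 1 0 0 * x1) * a 1 1 1 = 0) :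
    ∃ x y z : Fin 2 → ℂ, x ≠ 0 ∧ y ≠ 0 ∧ z ≠ 0 ∧
      (∀ k, ∑ i, ∑ j, a i j k * x i * y j = 0) ∧
      (∀ j, ∑ i, ∑ k, a i j k * x i * z k = 0) ∧
      (∀ i, ∑ j, ∑ k, a i j k * y j * z k = 0) := by
  rcases eq_or_ne ((a 0 0 0 * x0 + a 1 0 0 * x1)) 0 with h00 | h00
  swap
  · refine build a x0 x1 (-(a 0 1 0 * x0 + a 1 1 0 * x1)) ((a 0 0 0 * x0 + a 1 0 0 * x1)) (-(a 0 0 1 * x0 + a 1 0 1 * x1)) ((a 0 0 0 * x0 + a 1 0 0 * x1)) hx (Or.inr h00) (Or.inr h00) ?_ ?_ ?_ ?_ ?_ ?_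
    · ring
    · linear_combination hdet
    · ring
    · linear_combination hdet
    · linear_combination (a 0 0 0 * x0 + a 1 0 0 * x1) * hT0 - a 0 0 0 * hdet
    · linear_combination (a 0 0 0 * x0 + a 1 0 0 * x1) * hT1 - a 1 0 0 * hdet
  rcases eq_or_ne ((a 0 0 1 * x0 + a 1 0 1 * x1)) 0 with h01 | h01
  swap
  · refine build a x0 x1 (-(a 0 1 1 * x0 + a 1 1 1 * x1)) ((a 0 0 1 * x0 + a 1 0 1 * x1)) (-(a 0 0 1 * x0 + a 1 0 1 * x1)) ((a 0 0 0 * x0 + a 1 0 0 * x1)) hx (Or.inr h01) (Or.inl (neg_ne_zero.mpr h01)) ?_ ?_ ?_ ?_ ?_ ?_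
    · linear_combination -hdet
    · ring
    · ring
    · linear_combination hdet
    · linear_combination (a 0 0 1 * x0 + a 1 0 1 * x1) * hT0 - a 0 0 1 * hdet
    · linear_combination (a 0 0 1 * x0 + a 1 0 1 * x1) * hT1 - a 1 0 1 * hdet
  rcases eq_or_ne ((a 0 1 0 * x0 + a 1 1 0 * x1)) 0 with h10 | h10
  swap
  · refine build a x0 x1 (-(a 0 1 0 * x0 + a 1 1 0 * x1)) ((a 0 0 0 * x0 + a 1 0 0 * x1)) (-(a 0 1 1 * x0 + a 1 1 1 * x1)) ((a 0 1 0 * x0 + a 1 1 0 * x1)) hx (Or.inl (neg_ne_zero.mpr h10)) (Or.inr h10) ?_ ?_ ?_ ?_ ?_ ?_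
    · ring
    · linear_combination hdet
    · linear_combination -hdet
    · ring
    · linear_combination (a 0 1 0 * x0 + a 1 1 0 * x1) * hT0 - a 0 1 0 * hdet
    · linear_combination (a 0 1 0 * x0 + a 1 1 0 * x1) * hT1 - a 1 1 0 * hdet
  rcases eq_or_ne ((a 0 1 1 * x0 + a 1 1 1 * x1)) 0 with h11 | h11
  swap
  · refine build a x0 x1 (-(a 0 1 1 * x0 + a 1 1 1 * x1)) ((a 0 0 1 * x0 + a 1 0 1 * x1)) (-(a 0 1 1 * x0 + a 1 1 1 * x1)) ((a 0 1 0 * x0 + a 1 1 0 * x1)) hx (Or.inl (neg_ne_zero.mpr h11)) (Or.inl (neg_ne_zero.mpr h11)) ?_ ?_ ?_ ?_ ?_ ?_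
    · linear_combination -hdet
    · ring
    · linear_combination -hdet
    · ring
    · linear_combination (a 0 1 1 * x0 + a 1 1 1 * x1) * hT0 - a 0 1 1 * hdet
    · linear_combination (a 0 1 1 * x0 + a 1 1 1 * x1) * hT1 - a 1 1 1 * hdet
  rcases hx with hx0 | hx1
  · by_cases hv : a 1 0 0 = 0 ∧ a 1 1 0 = 0
    · have ha0 : a 0 0 0 = 0 := by
        have h5 : x0 * a 0 0 0 = 0 := by linear_combination h00 - x1 * hv.1
        exact (mul_eq_zero.mp h5).resolve_left hx0
      refine build a x0 x1 1 0 1 0 (Or.inl hx0) (Or.inl one_ne_zero) (Or.inl one_ne_zero)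
        ?_ ?_ ?_ ?_ ?_ ?_
      · linear_combination h00
      · linear_combination h01
      · linear_combination h00
      · linear_combination h10
      · linear_combination ha0
      · linear_combination hv.1
    · have hy : a 1 1 0 ≠ 0 ∨ -(a 1 0 0) ≠ 0 := by
        rcases not_and_or.mp hv with h | h
        · exact Or.inr (neg_ne_zero.mpr h)
        · exact Or.inl h
      refine build a x0 x1 (a 1 1 0) (-(a 1 0 0)) 1 0 (Or.inl hx0) hy (Or.inl one_ne_zero)
        ?_ ?_ ?_ ?_ ?_ ?_
      · linear_combination a 1 1 0 * h00 - a 1 0 0 * h10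
      · linear_combination a 1 1 0 * h01 - a 1 0 0 * h11
      · linear_combination h00
      · linear_combination h10
      · have h5 : x0 * (a 0 0 0 * a 1 1 0 - a 0 1 0 * a 1 0 0) = 0 := by
          linear_combination a 1 1 0 * h00 - a 1 0 0 * h10
        have h6 := (mul_eq_zero.mp h5).resolve_left hx0
        linear_combination h6
      · ring
  · by_cases hv : a 0 0 0 = 0 ∧ a 0 1 0 = 0
    · have ha1 : a 1 0 0 = 0 := by
        have h5 : x1 * a 1 0 0 = 0 := by linear_combination h00 - x0 * hv.1
        exact (mul_eq_zero.mp h5).resolve_left hx1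
      refine build a x0 x1 1 0 1 0 (Or.inr hx1) (Or.inl one_ne_zero) (Or.inl one_ne_zero)
        ?_ ?_ ?_ ?_ ?_ ?_
      · linear_combination h00
      · linear_combination h01
      · linear_combination h00
      · linear_combination h10
      · linear_combination hv.1
      · linear_combination ha1
    · have hy : a 0 1 0 ≠ 0 ∨ -(a 0 0 0) ≠ 0 := by
        rcases not_and_or.mp hv with h | h
        · exact Or.inr (neg_ne_zero.mpr h)
        · exact Or.inl h
      refine build a x0 x1 (a 0 1 0) (-(a 0 0 0)) 1 0 (Or.inr hx1) hy (Or.inl one_ne_zero)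
        ?_ ?_ ?_ ?_ ?_ ?_
      · linear_combination a 0 1 0 * h00 - a 0 0 0 * h10
      · linear_combination a 0 1 0 * h01 - a 0 0 0 * h11
      · linear_combination h00
      · linear_combination h10
      · ring
      · have h5 : x1 * (a 1 0 0 * a 0 1 0 - a 1 1 0 * a 0 0 0) = 0 := by
          linear_combination a 0 1 0 * h00 - a 0 0 0 * h10
        have h6 := (mul_eq_zero.mp h5).resolve_left hx1
        linear_combination h6

/-- Cayley: the system of six bilinear equations associated with
`𝒜 ∈ ℂ^{2×2×2}` has a solution `(x,y,z)` with `x, y, z` all nonzero iff the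
`2×2×2` hyperdeterminant
`Det_{2,2,2}(𝒜) = (1/4)[det(P+Q) − det(P−Q)]² − 4 det(P) det(Q)` vanishes. -/
theorem stmt_19 (a : Fin 2 → Fin 2 → Fin 2 → ℂ)
    (P Q : Matrix (Fin 2) (Fin 2) ℂ)
    (hP : P = !![a 0 0 0, a 0 1 0; a 0 0 1, a 0 1 1])
    (hQ : Q = !![a 1 0 0, a 1 1 0; a 1 0 1, a 1 1 1]) :
    (∃ x y z : Fin 2 → ℂ, x ≠ 0 ∧ y ≠ 0 ∧ z ≠ 0 ∧
      (∀ k, ∑ i, ∑ j, a i j k * x i * y j = 0) ∧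
      (∀ j, ∑ i, ∑ k, a i j k * x i * z k = 0) ∧
      (∀ i, ∑ j, ∑ k, a i j k * y j * z k = 0)) ↔
    (1 / 4 : ℂ) * ((P + Q).det - (P - Q).det) ^ 2 - 4 * P.det * Q.det = 0 := by
  have hR : (1 / 4 : ℂ) * ((P + Q).det - (P - Q).det) ^ 2 - 4 * P.det * Q.det
      = (a 0 0 0 * a 1 1 1 + a 0 1 1 * a 1 0 0 - a 0 1 0 * a 1 0 1 - a 0 0 1 * a 1 1 0) ^ 2 - 4 * (a 0 0 0 * a 0 1 1 - a 0 1 0 * a 0 0 1) * (a 1 0 0 * a 1 1 1 - a 1 1 0 * a 1 0 1) := by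
    subst hP hQ
    simp [Matrix.det_fin_two]
    ring
  rw [hR]
  constructor
  · rintro ⟨x, y, z, hx, hy, hz, h1, h2, h3⟩
    simp only [Fin.sum_univ_two] at h1 h2 h3
    have e10 := h1 0
    have e11 := h1 1
    have e20 := h2 0
    have e21 := h2 1
    have e30 := h3 0
    have e31 := h3 1
    have hT : ((a 0 1 1 * x 0 + a 1 1 1 * x 1) * a 0 0 0 - (a 0 0 1 * x 0 + a 1 0 1 * x 1) * a 0 1 0 - (a 0 1 0 * x 0 + a 1 1 0 * x 1) * a 0 0 1 + (a 0 0 0 * x 0 + a 1 0 0 * x 1) * a 0 1 1 = 0) ∧ ((a 0 1 1 * x 0 + a 1 1 1 * x 1) * a 1 0 0 - (a 0 0 1 * x 0 + a 1 0 1 * x 1) * a 1 1 0 - (a 0 1 0 * x 0 + a 1 1 0 * x 1) * a 1 0 1 + (a 0 0 0 * x 0 + a 1 0 0 * x 1) * a 1 1 1 = 0) := by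
      rcases fun_ne2 y hy with hys | hys <;> rcases fun_ne2 z hz with hzs | hzs
      · constructor
        · have h5 : ((a 0 1 1 * x 0 + a 1 1 1 * x 1) * a 0 0 0 - (a 0 0 1 * x 0 + a 1 0 1 * x 1) * a 0 1 0 - (a 0 1 0 * x 0 + a 1 1 0 * x 1) * a 0 0 1 + (a 0 0 0 * x 0 + a 1 0 0 * x 1) * a 0 1 1) * (y 0 * z 0) = 0 := by
            linear_combination (-(a 0 1 0 * z 0) - a 0 1 1 * z 1) * e11 + (a 0 1 1 * y 0) * e20 + (-(a 0 0 1 * y 0)) * e21 + (a 0 1 1 * x 0 + a 1 1 1 * x 1) * e30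
          exact (mul_eq_zero.mp h5).resolve_right (mul_ne_zero hys hzs)
        · have h5 : ((a 0 1 1 * x 0 + a 1 1 1 * x 1) * a 1 0 0 - (a 0 0 1 * x 0 + a 1 0 1 * x 1) * a 1 1 0 - (a 0 1 0 * x 0 + a 1 1 0 * x 1) * a 1 0 1 + (a 0 0 0 * x 0 + a 1 0 0 * x 1) * a 1 1 1) * (y 0 * z 0) = 0 := by
            linear_combination (-(a 1 1 0 * z 0) - a 1 1 1 * z 1) * e11 + (a 1 1 1 * y 0) * e20 + (-(a 1 0 1 * y 0)) * e21 + (a 0 1 1 * x 0 + a 1 1 1 * x 1) * e31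
          exact (mul_eq_zero.mp h5).resolve_right (mul_ne_zero hys hzs)
      · constructor
        · have h5 : ((a 0 1 1 * x 0 + a 1 1 1 * x 1) * a 0 0 0 - (a 0 0 1 * x 0 + a 1 0 1 * x 1) * a 0 1 0 - (a 0 1 0 * x 0 + a 1 1 0 * x 1) * a 0 0 1 + (a 0 0 0 * x 0 + a 1 0 0 * x 1) * a 0 1 1) * (y 0 * z 1) = 0 := by
            linear_combination (a 0 1 0 * z 0 + a 0 1 1 * z 1) * e10 + (-(a 0 1 0 * y 0)) * e20 + (a 0 0 0 * y 0) * e21 + (-(a 0 1 0 * x 0) - a 1 1 0 * x 1) * e30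
          exact (mul_eq_zero.mp h5).resolve_right (mul_ne_zero hys hzs)
        · have h5 : ((a 0 1 1 * x 0 + a 1 1 1 * x 1) * a 1 0 0 - (a 0 0 1 * x 0 + a 1 0 1 * x 1) * a 1 1 0 - (a 0 1 0 * x 0 + a 1 1 0 * x 1) * a 1 0 1 + (a 0 0 0 * x 0 + a 1 0 0 * x 1) * a 1 1 1) * (y 0 * z 1) = 0 := by
            linear_combination (a 1 1 0 * z 0 + a 1 1 1 * z 1) * e10 + (-(a 1 1 0 * y 0)) * e20 + (a 1 0 0 * y 0) * e21 + (-(a 0 1 0 * x 0) - a 1 1 0 * x 1) * e31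
          exact (mul_eq_zero.mp h5).resolve_right (mul_ne_zero hys hzs)
      · constructor
        · have h5 : ((a 0 1 1 * x 0 + a 1 1 1 * x 1) * a 0 0 0 - (a 0 0 1 * x 0 + a 1 0 1 * x 1) * a 0 1 0 - (a 0 1 0 * x 0 + a 1 1 0 * x 1) * a 0 0 1 + (a 0 0 0 * x 0 + a 1 0 0 * x 1) * a 0 1 1) * (y 1 * z 0) = 0 := by
            linear_combination (-(a 0 0 1 * z 0)) * e10 + (a 0 0 0 * z 0) * e11 + (a 0 0 1 * y 0 + a 0 1 1 * y 1) * e20 + (-(a 0 0 1 * x 0) - a 1 0 1 * x 1) * e30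
          exact (mul_eq_zero.mp h5).resolve_right (mul_ne_zero hys hzs)
        · have h5 : ((a 0 1 1 * x 0 + a 1 1 1 * x 1) * a 1 0 0 - (a 0 0 1 * x 0 + a 1 0 1 * x 1) * a 1 1 0 - (a 0 1 0 * x 0 + a 1 1 0 * x 1) * a 1 0 1 + (a 0 0 0 * x 0 + a 1 0 0 * x 1) * a 1 1 1) * (y 1 * z 0) = 0 := by
            linear_combination (-(a 1 0 1 * z 0)) * e10 + (a 1 0 0 * z 0) * e11 + (a 1 0 1 * y 0 + a 1 1 1 * y 1) * e20 + (-(a 0 0 1 * x 0) - a 1 0 1 * x 1) * e31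
          exact (mul_eq_zero.mp h5).resolve_right (mul_ne_zero hys hzs)
      · constructor
        · have h5 : ((a 0 1 1 * x 0 + a 1 1 1 * x 1) * a 0 0 0 - (a 0 0 1 * x 0 + a 1 0 1 * x 1) * a 0 1 0 - (a 0 1 0 * x 0 + a 1 1 0 * x 1) * a 0 0 1 + (a 0 0 0 * x 0 + a 1 0 0 * x 1) * a 0 1 1) * (y 1 * z 1) = 0 := by
            linear_combination (-(a 0 0 1 * z 1)) * e10 + (a 0 0 0 * z 1) * e11 + (-(a 0 0 0 * y 0) - a 0 1 0 * y 1) * e20 + (a 0 0 0 * x 0 + a 1 0 0 * x 1) * e30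
          exact (mul_eq_zero.mp h5).resolve_right (mul_ne_zero hys hzs)
        · have h5 : ((a 0 1 1 * x 0 + a 1 1 1 * x 1) * a 1 0 0 - (a 0 0 1 * x 0 + a 1 0 1 * x 1) * a 1 1 0 - (a 0 1 0 * x 0 + a 1 1 0 * x 1) * a 1 0 1 + (a 0 0 0 * x 0 + a 1 0 0 * x 1) * a 1 1 1) * (y 1 * z 1) = 0 := by
            linear_combination (-(a 1 0 1 * z 1)) * e10 + (a 1 0 0 * z 1) * e11 + (-(a 1 0 0 * y 0) - a 1 1 0 * y 1) * e20 + (a 0 0 0 * x 0 + a 1 0 0 * x 1) * e31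
          exact (mul_eq_zero.mp h5).resolve_right (mul_ne_zero hys hzs)
    have d0 : ((a 0 0 0 * a 1 1 1 + a 0 1 1 * a 1 0 0 - a 0 1 0 * a 1 0 1 - a 0 0 1 * a 1 1 0) ^ 2 - 4 * (a 0 0 0 * a 0 1 1 - a 0 1 0 * a 0 0 1) * (a 1 0 0 * a 1 1 1 - a 1 1 0 * a 1 0 1)) * x 0 = 0 := by
      linear_combination (a 0 0 0 * a 1 1 1 + a 0 1 1 * a 1 0 0 - a 0 1 0 * a 1 0 1 - a 0 0 1 * a 1 1 0) * hT.2 - 2 * (a 1 0 0 * a 1 1 1 - a 1 1 0 * a 1 0 1) * hT.1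
    have d1 : ((a 0 0 0 * a 1 1 1 + a 0 1 1 * a 1 0 0 - a 0 1 0 * a 1 0 1 - a 0 0 1 * a 1 1 0) ^ 2 - 4 * (a 0 0 0 * a 0 1 1 - a 0 1 0 * a 0 0 1) * (a 1 0 0 * a 1 1 1 - a 1 1 0 * a 1 0 1)) * x 1 = 0 := by
      linear_combination (a 0 0 0 * a 1 1 1 + a 0 1 1 * a 1 0 0 - a 0 1 0 * a 1 0 1 - a 0 0 1 * a 1 1 0) * hT.1 - 2 * (a 0 0 0 * a 0 1 1 - a 0 1 0 * a 0 0 1) * hT.2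
    rcases fun_ne2 x hx with h | h
    · exact (mul_eq_zero.mp d0).resolve_right h
    · exact (mul_eq_zero.mp d1).resolve_right h
  · intro hD
    by_cases hc : (a 0 0 0 * a 1 1 1 + a 0 1 1 * a 1 0 0 - a 0 1 0 * a 1 0 1 - a 0 0 1 * a 1 1 0) = 0 ∧ (a 0 0 0 * a 0 1 1 - a 0 1 0 * a 0 0 1) = 0
    · exact key a 1 0 (Or.inl one_ne_zero) (by linear_combination hc.2)
        (by linear_combination 2 * hc.2) (by linear_combination hc.1)
    · have hx : -(a 0 0 0 * a 1 1 1 + a 0 1 1 * a 1 0 0 - a 0 1 0 * a 1 0 1 - a 0 0 1 * a 1 1 0) ≠ 0 ∨ 2 * (a 0 0 0 * a 0 1 1 - a 0 1 0 * a 0 0 1) ≠ 0 := by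
        rcases not_and_or.mp hc with h | h
        · exact Or.inl (neg_ne_zero.mpr h)
        · exact Or.inr (mul_ne_zero two_ne_zero h)
      exact key a (-(a 0 0 0 * a 1 1 1 + a 0 1 1 * a 1 0 0 - a 0 1 0 * a 1 0 1 - a 0 0 1 * a 1 1 0)) (2 * (a 0 0 0 * a 0 1 1 - a 0 1 0 * a 0 0 1)) hx (by linear_combination -(a 0 0 0 * a 0 1 1 - a 0 1 0 * a 0 0 1) * hD) (by ring)
        (by linear_combination -hD)
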